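/- Let σ > 0, r ≥ 0, let f be the Ricean fading kernel, and let mmse be the canonical MMSE of an arbitrary discrete input with finite support. Then lim_{snr → +∞} snr² · ∫₀^∞ f(t)·mmse(snr·t) dt = e^{−r²/(2σ²)}·M[mmse; 2]/(2σ²). (First-order high-snr coefficient of the average MMSE in a Rayleigh or Ricean fading coherent channel; in particular the average MMSE decays as snr^{−2}.) -/

import Mathlib

open MeasureTheory Filter Asymptotics Topology

/-- Gaussian weight `exp(-|y - √s·x|²)`. -/
noncomputable def gaussWeight (s : ℝ) (x y : ℂ) : ℝ :=
  Real.exp (-(‖y - (Real.sqrt s : ℂ) * x‖) ^ 2)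

/-- Conditional-mean estimator `X̂_s(y)` for a discrete input with points `x` and weights `p`. -/
noncomputable def condMean {K : ℕ} (x : Fin K → ℂ) (p : Fin K → ℝ) (s : ℝ) (y : ℂ) : ℂ :=
  (∑ j, (p j : ℂ) * x j * (gaussWeight s (x j) y : ℂ)) /
    (∑ j, (p j : ℂ) * (gaussWeight s (x j) y : ℂ))

/-- Canonical MMSE of a discrete input with finite support in the AWGN channel. -/
noncomputable def discreteMMSE {K : ℕ} (x : Fin K → ℂ) (p : Fin K → ℝ) (s : ℝ) : ℝ :=
  ∑ i, p i * ∫ y : ℂ,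
    (‖x i - condMean x p s y‖) ^ 2 * Real.pi⁻¹ * gaussWeight s (x i) y

/-- Real Mellin transform `M[f; z] = ∫₀^∞ t^{z-1} f(t) dt`. -/
noncomputable def mellinR (f : ℝ → ℝ) (z : ℝ) : ℝ :=
  ∫ t in Set.Ioi (0 : ℝ), t ^ (z - 1) * f t

/-- Modified Bessel function of the first kind of order zero. -/
noncomputable def besselI0 (x : ℝ) : ℝ :=
  ∑' n : ℕ, (x / 2) ^ (2 * n) / ((n.factorial : ℝ)) ^ 2

/-- Ricean fading kernel `f(t) = (t/(2σ²)) e^{-(t+r²)/(2σ²)} I₀(r√t/σ²)` (`r = 0`: Rayleigh). -/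
noncomputable def riceKernel (σ r t : ℝ) : ℝ :=
  t / (2 * σ ^ 2) * Real.exp (-((t + r ^ 2) / (2 * σ ^ 2))) *
    besselI0 (r * Real.sqrt t / σ ^ 2)

/-!
Substituting `u = snr·t` turns `snr² ∫ f(t) mmse(snr t) dt` into `∫ snr f(u/snr) mmse(u) du`.
Since `f(t) ~ t e^{-r²/(2σ²)}/(2σ²)` as `t → 0`, the integrand tends to
`u e^{-r²/(2σ²)} mmse(u)/(2σ²)`, whose integral is the claimed limit. Dominated convergence
applies because `I₀(z) ≤ e^{z²/4}` gives `snr f(u/snr) ≤ u e^{εu}/(2σ²)` for large `snr`, while the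
MMSE decays exponentially: the estimation error is a posterior average of the differences
`x i - x j` (Jensen), and completing the square in the product of the Gaussian weights of `x i` and
`x j` bounds the contribution of the pair by `√(p i p j) |x i - x j|² e^{-s |x i - x j|²/4}`.
-/

lemma besselI0_term_eq (x : ℝ) (n : ℕ) :
    (x / 2) ^ (2 * n) / (n.factorial : ℝ) ^ 2 = (x ^ 2 / 4) ^ n / (n.factorial : ℝ) ^ 2 := by
  rw [pow_mul]; ring

lemma besselI0_term_le (x : ℝ) (n : ℕ) :
    (x / 2) ^ (2 * n) / (n.factorial : ℝ) ^ 2 ≤ (x ^ 2 / 4) ^ n / n.factorial := by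
  rw [besselI0_term_eq, sq (n.factorial : ℝ)]
  have : (1 : ℝ) ≤ n.factorial := by exact_mod_cast n.factorial_pos
  exact div_le_div_of_nonneg_left (by positivity) (by positivity)
    (le_mul_of_one_le_left (by positivity) this)

lemma summable_besselI0_term (x : ℝ) :
    Summable fun n : ℕ => (x / 2) ^ (2 * n) / (n.factorial : ℝ) ^ 2 :=
  (Real.summable_pow_div_factorial (x ^ 2 / 4)).of_nonneg_of_le
    (fun n => by rw [besselI0_term_eq]; positivity) (besselI0_term_le x)

lemma one_le_besselI0 (x : ℝ) : 1 ≤ besselI0 x := by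
  simpa [besselI0] using (summable_besselI0_term x).le_tsum 0
    (fun n _ => by rw [besselI0_term_eq]; positivity)

lemma besselI0_le_exp (x : ℝ) : besselI0 x ≤ Real.exp (x ^ 2 / 4) := by
  rw [Real.exp_eq_exp_ℝ, NormedSpace.exp_eq_tsum_div]
  exact (summable_besselI0_term x).tsum_le_tsum (besselI0_term_le x)
    (Real.summable_pow_div_factorial _)

lemma tendsto_besselI0_zero : Tendsto besselI0 (𝓝 0) (𝓝 1) := by
  have h : Tendsto (fun x : ℝ => Real.exp (x ^ 2 / 4)) (𝓝 0) (𝓝 1) := by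
    simpa using (by fun_prop : Continuous fun x : ℝ => Real.exp (x ^ 2 / 4)).tendsto 0
  exact tendsto_of_tendsto_of_tendsto_of_le_of_le tendsto_const_nhds h one_le_besselI0
    besselI0_le_exp

lemma measurable_besselI0 : Measurable besselI0 :=
  measurable_of_tendsto_metrizable' atTop
    (fun N => Finset.measurable_sum (Finset.range N) fun n _ => by fun_prop)
    (tendsto_pi_nhds.2 fun x => (summable_besselI0_term x).hasSum.tendsto_sum_nat)

lemma integrable_exp_neg_norm_sub_sq (c : ℂ) :
    Integrable fun y : ℂ => Real.exp (-‖y - c‖ ^ 2) := by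
  have h : Integrable fun y : ℂ => Real.exp (-‖y‖ ^ 2) := by
    refine (GaussianFourier.integrable_cexp_neg_mul_sq_norm_add (V := ℂ)
      (by norm_num : (0 : ℝ) < (1 : ℂ).re) 0 0).norm.congr (.of_forall fun y => ?_)
    simp [Complex.norm_exp]
    norm_cast
  exact h.comp_sub_right c

lemma integral_exp_neg_norm_sub_sq (c : ℂ) :
    ∫ y : ℂ, Real.pi⁻¹ * Real.exp (-‖y - c‖ ^ 2) = 1 := by
  have h : ∫ y : ℂ, Real.exp (-‖y‖ ^ 2) = Real.pi := by
    simpa [Complex.finrank_real_complex] using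
      GaussianFourier.integral_rexp_neg_mul_sq_norm (V := ℂ) one_pos
  rw [integral_const_mul, integral_sub_right_eq_self (fun y : ℂ => Real.exp (-‖y‖ ^ 2)) c, h,
    inv_mul_cancel₀ Real.pi_ne_zero]

lemma norm_sub_mul_sq_add_norm_sub_mul_sq (c a b y : ℂ) :
    ‖y - c * a‖ ^ 2 + ‖y - c * b‖ ^ 2
      = 2 * ‖y - c * ((a + b) / 2)‖ ^ 2 + ‖c‖ ^ 2 * ‖a - b‖ ^ 2 / 2 := by
  simp only [Complex.sq_norm, Complex.normSq_apply, Complex.sub_re, Complex.sub_im,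
    Complex.mul_re, Complex.mul_im, Complex.add_re, Complex.add_im, Complex.div_ofNat_re,
    Complex.div_ofNat_im]
  ring

lemma sqrt_gaussWeight_mul_gaussWeight {s : ℝ} (hs : 0 ≤ s) (a b y : ℂ) :
    √(gaussWeight s a y * gaussWeight s b y)
      = Real.exp (-(s * ‖a - b‖ ^ 2 / 4)) * Real.exp (-‖y - √s * ((a + b) / 2)‖ ^ 2) := by
  have hc : ‖(√s : ℂ)‖ ^ 2 = s := by
    rw [Complex.norm_real, Real.norm_of_nonneg (Real.sqrt_nonneg s), Real.sq_sqrt hs]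
  rw [gaussWeight, gaussWeight, ← Real.exp_add, ← Real.exp_half, ← Real.exp_add]
  congr 1
  linear_combination (-1 / 2 : ℝ) * norm_sub_mul_sq_add_norm_sub_mul_sq (√s) a b y
    - (‖a - b‖ ^ 2 / 4) * hc

lemma mul_div_le_sqrt_mul {a b D : ℝ} (ha : 0 ≤ a) (hb : 0 ≤ b) (haD : a ≤ D) (hbD : b ≤ D) :
    a * b / D ≤ √(a * b) := by
  have hsD : √(a * b) ≤ D :=
    Real.sqrt_le_iff.2 ⟨ha.trans haD, by nlinarith⟩
  refine div_le_of_le_mul₀ (ha.trans haD) (Real.sqrt_nonneg _) ?_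
  calc a * b = √(a * b) * √(a * b) := (Real.mul_self_sqrt (mul_nonneg ha hb)).symm
    _ ≤ √(a * b) * D := mul_le_mul_of_nonneg_left hsD (Real.sqrt_nonneg _)

lemma gaussWeight_pos (s : ℝ) (a y : ℂ) : 0 < gaussWeight s a y := Real.exp_pos _

noncomputable def posterior {K : ℕ} (x : Fin K → ℂ) (p : Fin K → ℝ) (s : ℝ) (y : ℂ)
    (j : Fin K) : ℝ :=
  p j * gaussWeight s (x j) y / ∑ k, p k * gaussWeight s (x k) y

section Posterior

variable {K : ℕ} (x : Fin K → ℂ) {p : Fin K → ℝ}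

lemma condMean_eq_sum_posterior (s : ℝ) (y : ℂ) :
    condMean x p s y = ∑ j, (posterior x p s y j : ℂ) * x j := by
  simp only [condMean, posterior]
  push_cast
  rw [Finset.sum_div]
  exact Finset.sum_congr rfl fun j _ => by ring

lemma posterior_nonneg (hp : ∀ j, 0 < p j) (s : ℝ) (y : ℂ) (j : Fin K) :
    0 ≤ posterior x p s y j := by
  exact div_nonneg (mul_nonneg (hp j).le (gaussWeight_pos s _ y).le)
    (Finset.sum_nonneg fun k _ => mul_nonneg (hp k).le (gaussWeight_pos s _ y).le)

lemma mul_gaussWeight_le_sum (hp : ∀ j, 0 < p j) (s : ℝ) (y : ℂ) (i : Fin K) :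
    p i * gaussWeight s (x i) y ≤ ∑ k, p k * gaussWeight s (x k) y :=
  Finset.single_le_sum (f := fun k => p k * gaussWeight s (x k) y)
    (fun k _ => mul_nonneg (hp k).le (gaussWeight_pos s _ y).le) (Finset.mem_univ i)

lemma sum_posterior (hp : ∀ j, 0 < p j) (s : ℝ) (y : ℂ) (i : Fin K) :
    ∑ j, posterior x p s y j = 1 := by
  simp only [posterior]
  rw [← Finset.sum_div, div_self]
  exact ((mul_pos (hp i) (gaussWeight_pos s _ y)).trans_le (mul_gaussWeight_le_sum x hp s y i)).ne'

lemma norm_sub_condMean_sq_le (hp : ∀ j, 0 < p j) (s : ℝ) (y : ℂ) (i : Fin K) :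
    ‖x i - condMean x p s y‖ ^ 2 ≤ ∑ j, posterior x p s y j * ‖x i - x j‖ ^ 2 := by
  have hsum := sum_posterior x hp s y i
  have hsumℂ : ∑ j, (posterior x p s y j : ℂ) = 1 := by exact_mod_cast hsum
  have hconv : ConvexOn ℝ Set.univ fun z : ℂ => ‖z‖ ^ 2 :=
    convexOn_univ_norm.pow (fun _ _ => norm_nonneg _) 2
  have hdiff : x i - condMean x p s y = ∑ j, posterior x p s y j • (x i - x j) := by
    simp only [condMean_eq_sum_posterior, Complex.real_smul, mul_sub, Finset.sum_sub_distrib,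
      ← Finset.sum_mul]
    rw [hsumℂ, one_mul]
  rw [hdiff]
  exact hconv.map_sum_le (fun j _ => posterior_nonneg x hp s y j) hsum (fun _ _ => trivial)

lemma mul_posterior_mul_gaussWeight_le (hp : ∀ j, 0 < p j) (s : ℝ) (y : ℂ) (i j : Fin K) :
    p i * posterior x p s y j * gaussWeight s (x i) y
      ≤ √(p i * p j) * √(gaussWeight s (x i) y * gaussWeight s (x j) y) := by
  have key := mul_div_le_sqrt_mul (mul_nonneg (hp i).le (gaussWeight_pos s (x i) y).le)
    (mul_nonneg (hp j).le (gaussWeight_pos s (x j) y).le) (mul_gaussWeight_le_sum x hp s y i)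
    (mul_gaussWeight_le_sum x hp s y j)
  rw [← Real.sqrt_mul (mul_nonneg (hp i).le (hp j).le), posterior]
  convert key using 2 <;> ring

end Posterior

section MMSE

variable {K : ℕ} {x : Fin K → ℂ} {p : Fin K → ℝ}

lemma mul_mmse_integrand_le (hp : ∀ j, 0 < p j) {s : ℝ} (hs : 0 ≤ s) (i : Fin K) (y : ℂ) :
    p i * (‖x i - condMean x p s y‖ ^ 2 * Real.pi⁻¹ * gaussWeight s (x i) y)
      ≤ ∑ j, √(p i * p j) * ‖x i - x j‖ ^ 2 * Real.exp (-(s * ‖x i - x j‖ ^ 2 / 4)) *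
          (Real.pi⁻¹ * Real.exp (-‖y - √s * ((x i + x j) / 2)‖ ^ 2)) := by
  calc p i * (‖x i - condMean x p s y‖ ^ 2 * Real.pi⁻¹ * gaussWeight s (x i) y)
      ≤ p i * ((∑ j, posterior x p s y j * ‖x i - x j‖ ^ 2) * Real.pi⁻¹ *
          gaussWeight s (x i) y) := by
        gcongr
        · exact (hp i).le
        · exact (gaussWeight_pos s _ y).le
        · exact norm_sub_condMean_sq_le x hp s y i
    _ = ∑ j, ‖x i - x j‖ ^ 2 * Real.pi⁻¹ *
          (p i * posterior x p s y j * gaussWeight s (x i) y) := by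
        simp only [Finset.mul_sum, Finset.sum_mul]
        exact Finset.sum_congr rfl fun j _ => by ring
    _ ≤ ∑ j, ‖x i - x j‖ ^ 2 * Real.pi⁻¹ *
          (√(p i * p j) * √(gaussWeight s (x i) y * gaussWeight s (x j) y)) := by
        exact Finset.sum_le_sum fun j _ => mul_le_mul_of_nonneg_left
          (mul_posterior_mul_gaussWeight_le x hp s y i j) (by positivity)
    _ = _ := by
        refine Finset.sum_congr rfl fun j _ => ?_
        rw [sqrt_gaussWeight_mul_gaussWeight hs]
        ring

lemma discreteMMSE_le (hp : ∀ j, 0 < p j) {s : ℝ} (hs : 0 ≤ s) :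
    discreteMMSE x p s
      ≤ ∑ i, ∑ j, √(p i * p j) * ‖x i - x j‖ ^ 2 * Real.exp (-(s * ‖x i - x j‖ ^ 2 / 4)) := by
  refine Finset.sum_le_sum fun i _ => ?_
  have hgauss (j : Fin K) : Integrable fun y : ℂ =>
      Real.pi⁻¹ * Real.exp (-‖y - √s * ((x i + x j) / 2)‖ ^ 2) :=
    (integrable_exp_neg_norm_sub_sq _).const_mul _
  rw [← integral_const_mul]
  calc ∫ y, p i * (‖x i - condMean x p s y‖ ^ 2 * Real.pi⁻¹ * gaussWeight s (x i) y)
      ≤ ∫ y, ∑ j, √(p i * p j) * ‖x i - x j‖ ^ 2 * Real.exp (-(s * ‖x i - x j‖ ^ 2 / 4)) *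
          (Real.pi⁻¹ * Real.exp (-‖y - √s * ((x i + x j) / 2)‖ ^ 2)) := by
        refine integral_mono_of_nonneg (.of_forall fun y => ?_)
          (integrable_finsetSum _ fun j _ => (hgauss j).const_mul _)
          (.of_forall fun y => mul_mmse_integrand_le hp hs i y)
        have := gaussWeight_pos s (x i) y
        have := hp i
        positivity
    _ = _ := by
        rw [integral_finsetSum _ fun j _ => (hgauss j).const_mul _]
        exact Finset.sum_congr rfl fun j _ => by
          rw [integral_const_mul, integral_exp_neg_norm_sub_sq, mul_one]

lemma discreteMMSE_nonneg (hp : ∀ j, 0 < p j) (s : ℝ) : 0 ≤ discreteMMSE x p s :=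
  Finset.sum_nonneg fun i _ => mul_nonneg (hp i).le <| integral_nonneg fun y => by
    have := gaussWeight_pos s (x i) y
    positivity

lemma exists_discreteMMSE_le_exp (hp : ∀ j, 0 < p j) :
    ∃ C δ : ℝ, 0 < δ ∧ ∀ s, 0 ≤ s → discreteMMSE x p s ≤ C * Real.exp (-(δ * s)) := by
  have hδ : ∀ᶠ δ in 𝓝[>] (0 : ℝ),
      0 < δ ∧ ∀ i j, x i = x j ∨ δ ≤ ‖x i - x j‖ ^ 2 / 4 := by
    refine eventually_mem_nhdsWithin.and
      (eventually_all.2 fun i => eventually_all.2 fun j => ?_)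
    rcases eq_or_ne (x i) (x j) with hij | hij
    · exact .of_forall fun _ => .inl hij
    · have : 0 < ‖x i - x j‖ ^ 2 / 4 := by
        have := sub_ne_zero.2 hij
        positivity
      filter_upwards [Ioo_mem_nhdsGT this] with δ hδ
      exact .inr hδ.2.le
  obtain ⟨δ, hδ0, hδle⟩ := hδ.exists
  refine ⟨∑ i, ∑ j, √(p i * p j) * ‖x i - x j‖ ^ 2, δ, hδ0, fun s hs => ?_⟩
  refine (discreteMMSE_le hp hs).trans ?_
  rw [Finset.sum_mul]
  refine Finset.sum_le_sum fun i _ => ?_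
  rw [Finset.sum_mul]
  refine Finset.sum_le_sum fun j _ => ?_
  rcases hδle i j with hij | hij
  · simp [hij]
  · gcongr
    nlinarith

lemma measurable_discreteMMSE : Measurable (discreteMMSE x p) := by
  refine Finset.measurable_sum _ fun i _ => measurable_const.mul ?_
  have : Measurable fun q : ℝ × ℂ =>
      ‖x i - condMean x p q.1 q.2‖ ^ 2 * Real.pi⁻¹ * gaussWeight q.1 (x i) q.2 := by
    unfold condMean gaussWeight
    fun_prop
  exact this.stronglyMeasurable.integral_prod_right'.measurable

end MMSE

section Rice

variable (σ r : ℝ)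

lemma riceKernel_nonneg {t : ℝ} (ht : 0 ≤ t) : 0 ≤ riceKernel σ r t :=
  mul_nonneg (by positivity) ((zero_le_one).trans (one_le_besselI0 _))

lemma riceKernel_le {t : ℝ} (ht : 0 ≤ t) :
    riceKernel σ r t ≤ t / (2 * σ ^ 2) * Real.exp (r ^ 2 * t / (4 * σ ^ 4)) := by
  have hexp : Real.exp (-((t + r ^ 2) / (2 * σ ^ 2))) ≤ 1 :=
    Real.exp_le_one_iff.2 (neg_nonpos.2 (by positivity))
  have hI : besselI0 (r * √t / σ ^ 2) ≤ Real.exp (r ^ 2 * t / (4 * σ ^ 4)) := by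
    convert besselI0_le_exp _ using 2
    rw [div_pow, mul_pow, Real.sq_sqrt ht]
    ring
  simpa [riceKernel] using mul_le_mul (mul_le_mul_of_nonneg_left hexp (by positivity)) hI
    ((zero_le_one).trans (one_le_besselI0 _)) (by positivity)

lemma measurable_riceKernel : Measurable (riceKernel σ r) := by
  unfold riceKernel
  have := measurable_besselI0
  fun_prop

lemma tendsto_mul_riceKernel_div (u : ℝ) :
    Tendsto (fun c => c * riceKernel σ r (u / c)) atTop
      (𝓝 (u / (2 * σ ^ 2) * Real.exp (-(r ^ 2 / (2 * σ ^ 2))))) := by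
  have hu : Tendsto (fun c : ℝ => u / c) atTop (𝓝 0) := tendsto_const_nhds.div_atTop tendsto_id
  have hexp : Tendsto (fun c : ℝ => Real.exp (-((u / c + r ^ 2) / (2 * σ ^ 2)))) atTop
      (𝓝 (Real.exp (-(r ^ 2 / (2 * σ ^ 2))))) := by
    simpa using ((hu.add_const (r ^ 2)).div_const (2 * σ ^ 2)).neg.rexp
  have hI : Tendsto (fun c : ℝ => besselI0 (r * √(u / c) / σ ^ 2)) atTop (𝓝 1) := by
    refine tendsto_besselI0_zero.comp ?_
    simpa using ((Real.continuous_sqrt.tendsto 0).comp hu).const_mul r |>.div_const (σ ^ 2)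
  have hlim := (tendsto_const_nhds (x := u / (2 * σ ^ 2))).mul (hexp.mul hI)
  rw [mul_one] at hlim
  refine hlim.congr' ?_
  filter_upwards [eventually_ne_atTop 0] with c hc
  simp only [riceKernel]
  field_simp

lemma mul_riceKernel_div_le (hσ : σ ≠ 0) {δ c u : ℝ} (hδ : 0 < δ) (hc : 0 < c)
    (hcr : r ^ 2 / (2 * δ * σ ^ 4) ≤ c) (hu : 0 ≤ u) :
    c * riceKernel σ r (u / c) ≤ u / (2 * σ ^ 2) * Real.exp (δ / 2 * u) := by
  have hexp : r ^ 2 * (u / c) / (4 * σ ^ 4) ≤ δ / 2 * u := by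
    rw [div_le_iff₀ (by positivity), mul_div_assoc', div_le_iff₀ hc]
    rw [div_le_iff₀ (by positivity)] at hcr
    nlinarith
  calc c * riceKernel σ r (u / c)
      ≤ c * (u / c / (2 * σ ^ 2) * Real.exp (r ^ 2 * (u / c) / (4 * σ ^ 4))) :=
        mul_le_mul_of_nonneg_left (riceKernel_le σ r (by positivity)) hc.le
    _ ≤ c * (u / c / (2 * σ ^ 2) * Real.exp (δ / 2 * u)) := by gcongr
    _ = _ := by field_simp

end Rice

lemma sq_mul_integral_riceKernel_mul_comp {σ r c : ℝ} (hc : 0 < c) (g : ℝ → ℝ) :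
    c ^ 2 * ∫ t in Set.Ioi 0, riceKernel σ r t * g (c * t)
      = ∫ u in Set.Ioi 0, c * riceKernel σ r (u / c) * g u := by
  have h := integral_comp_mul_left_Ioi (fun u => c * riceKernel σ r (u / c) * g u) 0 hc
  simp only [mul_zero, smul_eq_mul, mul_div_cancel_left₀ _ hc.ne'] at h
  rw [← mul_inv_cancel_left₀ hc.ne' (∫ u in Set.Ioi 0, c * riceKernel σ r (u / c) * g u), ← h]
  simp_rw [mul_assoc, integral_const_mul]
  ring

theorem tendsto_sq_mul_integral_riceKernel_mul {σ : ℝ} (r : ℝ) (hσ : σ ≠ 0) {g : ℝ → ℝ}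
    (hg : Measurable g) {C δ : ℝ} (hδ : 0 < δ)
    (hgb : ∀ u, 0 < u → ‖g u‖ ≤ C * Real.exp (-(δ * u))) :
    Tendsto (fun c => c ^ 2 * ∫ t in Set.Ioi 0, riceKernel σ r t * g (c * t)) atTop
      (𝓝 (Real.exp (-(r ^ 2 / (2 * σ ^ 2))) * mellinR g 2 / (2 * σ ^ 2))) := by
  have hlim : Tendsto (fun c => ∫ u in Set.Ioi 0, c * riceKernel σ r (u / c) * g u) atTop
      (𝓝 (∫ u in Set.Ioi 0, u / (2 * σ ^ 2) * Real.exp (-(r ^ 2 / (2 * σ ^ 2))) * g u)) := by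
    refine tendsto_integral_filter_of_dominated_convergence
      (fun u => C / (2 * σ ^ 2) * (u ^ (1 : ℝ) * Real.exp (-(δ / 2) * u ^ (1 : ℝ))))
      (.of_forall fun c => ?_) ?_ ?_ ?_
    · have := measurable_riceKernel σ r
      exact Measurable.aestronglyMeasurable (by fun_prop)
    · filter_upwards [eventually_gt_atTop 0, eventually_ge_atTop (r ^ 2 / (2 * δ * σ ^ 4))]
        with c hc hcr
      filter_upwards [ae_restrict_mem measurableSet_Ioi] with u (hu : 0 < u)
      have hk := mul_riceKernel_div_le σ r hσ hδ hc hcr hu.le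
      have hk0 := mul_nonneg hc.le (riceKernel_nonneg σ r (div_nonneg hu.le hc.le))
      calc ‖c * riceKernel σ r (u / c) * g u‖
          = c * riceKernel σ r (u / c) * ‖g u‖ := by
            rw [norm_mul, Real.norm_of_nonneg hk0]
        _ ≤ u / (2 * σ ^ 2) * Real.exp (δ / 2 * u) * (C * Real.exp (-(δ * u))) :=
            mul_le_mul hk (hgb u hu) (norm_nonneg _) (by positivity)
        _ = _ := by
            rw [Real.rpow_one, mul_mul_mul_comm, ← Real.exp_add]
            ring_nf
    · exact (integrableOn_rpow_mul_exp_neg_mul_rpow (by norm_num) one_pos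
        (half_pos hδ)).const_mul _
    · exact .of_forall fun u => (tendsto_mul_riceKernel_div σ r u).mul_const (g u)
  have hval : ∫ u in Set.Ioi 0, u / (2 * σ ^ 2) * Real.exp (-(r ^ 2 / (2 * σ ^ 2))) * g u
      = Real.exp (-(r ^ 2 / (2 * σ ^ 2))) * mellinR g 2 / (2 * σ ^ 2) := by
    simp only [mellinR, show (2 : ℝ) - 1 = 1 by norm_num, Real.rpow_one, ← integral_const_mul,
      ← integral_div]
    exact setIntegral_congr_fun measurableSet_Ioi fun u _ => by ring
  rw [hval] at hlim
  refine hlim.congr' ?_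
  filter_upwards [eventually_gt_atTop 0] with c hc
  exact (sq_mul_integral_riceKernel_mul_comp hc g).symm

theorem highSnr_avgMMSE_rice_firstOrder_general (σ r : ℝ) (hσ : 0 < σ)
    {K : ℕ} (x : Fin K → ℂ) (p : Fin K → ℝ)
    (hp : ∀ j, 0 < p j) :
    Tendsto
      (fun snr : ℝ =>
        snr ^ 2 * ∫ t in Set.Ioi (0 : ℝ), riceKernel σ r t * discreteMMSE x p (snr * t))
      atTop
      (𝓝 (Real.exp (-(r ^ 2 / (2 * σ ^ 2))) * mellinR (discreteMMSE x p) 2 / (2 * σ ^ 2))) := by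
  obtain ⟨C, δ, hδ, hdecay⟩ := exists_discreteMMSE_le_exp (x := x) hp
  exact tendsto_sq_mul_integral_riceKernel_mul r hσ.ne' measurable_discreteMMSE hδ fun u hu =>
    (Real.norm_of_nonneg (discreteMMSE_nonneg hp u)).trans_le (hdecay u hu.le)

/-- First-order high-snr coefficient of the average MMSE in a Rayleigh/Ricean fading
coherent channel driven by a discrete input: the average MMSE decays as `snr⁻²` with
coefficient `e^{-r²/(2σ²)}·M[mmse; 2]/(2σ²)`. -/
theorem highSnr_avgMMSE_rice_firstOrder (σ r : ℝ) (hσ : 0 < σ) (hr : 0 ≤ r)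
    {K : ℕ} (hK : 0 < K) (x : Fin K → ℂ) (p : Fin K → ℝ)
    (hx : Function.Injective x) (hp : ∀ j, 0 < p j) (hsum : ∑ j, p j = 1) :
    Tendsto
      (fun snr : ℝ =>
        snr ^ 2 * ∫ t in Set.Ioi (0 : ℝ), riceKernel σ r t * discreteMMSE x p (snr * t))
      atTop
      (𝓝 (Real.exp (-(r ^ 2 / (2 * σ ^ 2))) * mellinR (discreteMMSE x p) 2 / (2 * σ ^ 2))) :=
  highSnr_avgMMSE_rice_firstOrder_general σ r hσ x p hp
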